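/- arXiv:1407.4175 — 6 statements merged into one kernel-verified Lean document; each statement's English description precedes it below -/
import Mathlib

section
/- Let G be a finite abelian group of odd order, and let χ be an irreducible complex character of G. For s ∈ G of order |s| and ζ a fixed primitive |s|-th root of unity, let υ(χ,s) be the unique integer in [(1-|s|)/2, (|s|-1)/2] with χ(s) = ζ^{υ(χ,s)}. Then for ψ = Σ n_χ χ ∈ ℤ[Ĝ], the element Θ*(ψ) = Σ_{s∈G} ⟨ψ,s⟩_* s lies in ℤ[G] if and only if ψ lies in the kernel of the determinant map det(Σ n_χ χ) = Π χ^{n_χ}. -/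
lemma prod_zpow_eq_zpow_sum {ι β : Type*} [CommGroup β] (s : Finset ι) (f : ι → ℤ) (a : β) :
    ∏ i ∈ s, a ^ f i = a ^ ∑ i ∈ s, f i := by
  induction s using Finset.cons_induction with
  | empty => simp
  | cons i s hi ih => simp [Finset.prod_cons, Finset.sum_cons, zpow_add, ih]

/-- Let `G` be a finite abelian group of odd order. Fix compatible primitive
roots of unity `ζ n` and for each complex character `χ` and `s ∈ G` let `υ χ s` be the unique
integer in `[(1-|s|)/2, (|s|-1)/2]` with `χ s = ζ (orderOf s) ^ υ χ s`. Then for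
`ψ = Σ n_χ χ ∈ ℤ[Ĝ]`, the modified Stickelberger element `Θ*(ψ) = Σ_s ⟨ψ,s⟩_* s` has integral
coefficients iff `ψ` lies in the kernel of `det (Σ n_χ χ) = Π χ ^ n_χ`. -/
theorem stmt0 (G : Type*) [CommGroup G] [Fintype G] [Fintype (G →* ℂˣ)]
    (hodd : Odd (Fintype.card G))
    (ζ : ℕ → ℂˣ) (hζ : ∀ n : ℕ, 0 < n → IsPrimitiveRoot (ζ n) n)
    (υ : (G →* ℂˣ) → G → ℤ)
    (hυ1 : ∀ (χ : G →* ℂˣ) (s : G),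
      (1 - (orderOf s : ℤ)) ≤ 2 * υ χ s ∧ 2 * υ χ s ≤ (orderOf s : ℤ) - 1)
    (hυ2 : ∀ (χ : G →* ℂˣ) (s : G), χ s = ζ (orderOf s) ^ (υ χ s))
    (ψ : (G →* ℂˣ) → ℤ) :
    (∀ s : G, ∃ m : ℤ,
        (∑ χ : G →* ℂˣ, (ψ χ : ℚ) * (υ χ s : ℚ)) = (m : ℚ) * (orderOf s : ℚ)) ↔
      (∀ s : G, ∏ χ : G →* ℂˣ, (χ s) ^ (ψ χ) = 1) := by
  have key : ∀ s : G,
      (∃ m : ℤ, (∑ χ : G →* ℂˣ, (ψ χ : ℚ) * (υ χ s : ℚ)) = (m : ℚ) * (orderOf s : ℚ)) ↔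
      (∏ χ : G →* ℂˣ, (χ s) ^ (ψ χ) = 1) := by
    intro s
    have hn : 0 < orderOf s := orderOf_pos s
    have hprim := hζ (orderOf s) hn
    have hprod : (∏ χ : G →* ℂˣ, (χ s) ^ (ψ χ))
        = ζ (orderOf s) ^ (∑ χ : G →* ℂˣ, ψ χ * υ χ s) := by
      rw [← prod_zpow_eq_zpow_sum]
      refine Finset.prod_congr rfl fun χ _ => ?_
      rw [hυ2 χ s, ← zpow_mul, mul_comm]
    rw [hprod, hprim.zpow_eq_one_iff_dvd]
    constructor
    · rintro ⟨m, hm⟩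
      refine ⟨m, ?_⟩
      have : ((∑ χ : G →* ℂˣ, ψ χ * υ χ s : ℤ) : ℚ) = (((orderOf s : ℤ) * m : ℤ) : ℚ) := by
        push_cast
        rw [hm]; ring
      exact_mod_cast this
    · rintro ⟨m, hm⟩
      refine ⟨m, ?_⟩
      have : ((∑ χ : G →* ℂˣ, ψ χ * υ χ s : ℤ) : ℚ) = (((orderOf s : ℤ) * m : ℤ) : ℚ) := by
        exact_mod_cast congrArg (fun z : ℤ => (z : ℚ)) hm
      push_cast at this
      rw [this]; ring
  exact forall_congr' key
end

section
/- Let F be a field (a number field or a p-adic field), G a finite abelian group of odd order, and let Ω_F act on the characters Ĝ via the cyclotomic action and on G(-1) by ω·s = s^{κ(ω^{-1})}, where κ is the cyclotomic character mod exp(G). Then the modified Stickelberger map Θ*: ℚ[Ĝ] → ℚ[G(-1)], Θ*(χ) = Σ_s ⟨χ,s⟩_* s, is Ω_F-equivariant. -/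
/-- Let `G` be a finite abelian group of odd order and `C` an algebraically
closed field of characteristic `0` (playing the role of `F^c`). The absolute Galois group acts
on characters via the cyclotomic character `κ` (so `ω · χ = χ ^ z` where `z` represents
`κ(ω)` mod `exp G`) and on `G(-1)` by `ω · s = s ^ κ(ω⁻¹)`.  Equivariance of the modified
Stickelberger map `Θ* : ℚ[Ĝ] → ℚ[G(-1)]` amounts to the identity
`⟨ω · χ, s⟩_* = ⟨χ, ω⁻¹ · s⟩_*`, i.e. `⟨χ ^ z, s⟩_* = ⟨χ, s ^ z⟩_*` for every integer `z`
that is a unit modulo `exp G`. -/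
theorem stmt1 (G : Type*) [CommGroup G] [Fintype G]
    (hodd : Odd (Fintype.card G))
    (C : Type*) [Field C] [IsAlgClosed C] [CharZero C]
    (ζ : ℕ → Cˣ) (hζ : ∀ n : ℕ, 0 < n → IsPrimitiveRoot (ζ n) n)
    (υ : (G →* Cˣ) → G → ℤ)
    (hυ1 : ∀ (χ : G →* Cˣ) (s : G),
      (1 - (orderOf s : ℤ)) ≤ 2 * υ χ s ∧ 2 * υ χ s ≤ (orderOf s : ℤ) - 1)
    (hυ2 : ∀ (χ : G →* Cˣ) (s : G), χ s = ζ (orderOf s) ^ (υ χ s))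
    (z : ℤ) (hz : IsUnit (z : ZMod (Monoid.exponent G)))
    (χ : G →* Cˣ) (s : G) :
    (υ (χ ^ z) s : ℚ) / (orderOf s : ℚ) = (υ χ (s ^ z) : ℚ) / (orderOf (s ^ z) : ℚ) := by
  set n := orderOf s with hn
  have hnpos : 0 < n := orderOf_pos s
  -- z is a unit mod n
  have hdvd : n ∣ Monoid.exponent G := Monoid.order_dvd_exponent s
  have hzn : IsUnit ((z : ℤ) : ZMod n) := by
    have := hz.map (ZMod.castHom hdvd (ZMod n))
    rwa [map_intCast] at this
  -- reduce the exponent z modulo n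
  set k : ℕ := (z % (n : ℤ)).toNat with hk
  have hkz : (k : ℤ) = z % (n : ℤ) :=
    Int.toNat_of_nonneg (Int.emod_nonneg z (by exact_mod_cast hnpos.ne'))
  have hsz : s ^ z = s ^ k := by
    rw [← zpow_natCast, hkz]
    exact (zpow_mod_orderOf s z).symm
  have hkzmod : ((k : ℤ) : ZMod n) = ((z : ℤ) : ZMod n) := by
    rw [hkz]
    exact (ZMod.intCast_eq_intCast_iff _ _ _).mpr (Int.emod_emod_of_dvd z dvd_rfl)
  have hcop : n.Coprime k := by
    have : IsUnit ((k : ZMod n)) := by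
      rw [show ((k : ZMod n)) = ((k : ℤ) : ZMod n) by push_cast; ring, hkzmod]
      exact hzn
    exact ((ZMod.isUnit_iff_coprime k n).mp this).symm
  have horder : orderOf (s ^ z) = n := by
    rw [hsz]
    exact Nat.Coprime.orderOf_pow (hn ▸ hcop)
  -- the two υ values agree
  have hprim : IsPrimitiveRoot (ζ n) n := hζ n hnpos
  set u := υ (χ ^ z) s with hu
  set v := υ χ (s ^ z) with hv
  have h1 : ζ n ^ u = ζ n ^ (υ χ s * z) := by
    have := hυ2 (χ ^ z) s
    rw [← hn] at this
    rw [← this]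
    have h2 : (χ ^ z) s = (χ s) ^ z := rfl
    rw [h2, hυ2 χ s, ← hn, ← zpow_mul]
  have h2 : ζ n ^ v = ζ n ^ (υ χ s * z) := by
    have := hυ2 χ (s ^ z)
    rw [horder] at this
    rw [← this, map_zpow, hυ2 χ s, ← hn, ← zpow_mul]
  have hdvduv : (n : ℤ) ∣ u - v := by
    rw [← hprim.zpow_eq_one_iff_dvd, zpow_sub, h1, h2, mul_inv_cancel]
  have hb1 := hυ1 (χ ^ z) s
  have hb2 := hυ1 χ (s ^ z)
  rw [← hn] at hb1
  rw [horder] at hb2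
  have huv : u = v := by
    have h0 : u - v = 0 := by
      refine Int.eq_zero_of_abs_lt_dvd hdvduv ?_
      rw [abs_lt]
      constructor <;> omega
    omega
  rw [huv, horder, hn]
end

section
/- Let L/F be an abelian extension of p-adic fields with e_0 = |G_0/G_1| where G_n are the ramification groups in lower numbering. Then G_n = G_{n+1} for all n ≥ 1 not divisible by e_0. In particular, if L/F is wildly and weakly ramified then G_0 = G_1. -/
/-!
Fix a uniformizer `π` of `B`. For `σ ∈ G₀` write `σ π = π u_σ`; the residue of the unit `u_σ`
defines a character `θ₀ : G₀ → kˣ` with kernel `G₁` (over a perfect residue field, an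
automorphism in `Gₙ` lies in `Gₙ₊₁` as soon as it moves `π` by an element of `𝔪^(n+2)`), so
`e₀` is the order of the cyclic group `θ₀(G₀) ⊆ kˣ`. If `τ ∈ Gₙ \ Gₙ₊₁` commutes with `σ`,
comparing `σ(τ π)` with `τ(σ π)` modulo `π^(n+2)` gives `θ₀(σ)ⁿ = 1`; hence `e₀ ∣ n`.
Finally `e₀` divides `|kˣ|`, which is prime to `p`: if `G₂ = 1` and `G₀ ≠ G₁`, then `e₀ ∤ 1`
forces `G₁ = G₂ = 1` and `|G₀| = e₀` is prime to `p`.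
-/

open IsLocalRing

lemma ram_aux {A B : Type*} [CommRing A] [CommRing B] [IsLocalRing B] [Algebra A B]
    (σ : B ≃ₐ[A] B) (k : ℕ) :
    ∀ y ∈ (maximalIdeal B) ^ k, σ y ∈ (maximalIdeal B) ^ k := by
  intro y hy
  have h1 : Ideal.map (σ : B →+* B) (maximalIdeal B) ≤ maximalIdeal B := by
    rw [Ideal.map_le_iff_le_comap]
    intro x hx
    rw [Ideal.mem_comap]
    rw [mem_maximalIdeal] at hx ⊢
    intro hu
    exact hx (by simpa using hu.map (σ.symm : B →+* B))
  have h2 : Ideal.map (σ : B →+* B) ((maximalIdeal B) ^ k) ≤ (maximalIdeal B) ^ k := by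
    rw [Ideal.map_pow]
    exact Ideal.pow_right_mono h1 k
  exact h2 (Ideal.mem_map_of_mem _ hy)

/-- The `n`-th ramification group (lower numbering) of an extension `B/A` of local rings,
viewed inside `Aut(B/A)`: the automorphisms `σ` with `σ x ≡ x mod 𝔪_B^(n+1)` for all `x`. -/
def ramificationGroup (A B : Type*) [CommRing A] [CommRing B] [IsLocalRing B] [Algebra A B]
    (n : ℕ) : Subgroup (B ≃ₐ[A] B) where
  carrier := {σ | ∀ x : B, σ x - x ∈ (maximalIdeal B) ^ (n + 1)}
  one_mem' := by intro x; simp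
  mul_mem' := by
    intro σ τ hσ hτ x
    have h : (σ * τ) x - x = σ (τ x - x) + (σ x - x) := by
      simp [AlgEquiv.mul_apply, map_sub]
    rw [h]
    exact add_mem (ram_aux σ (n+1) _ (hτ x)) (hσ x)
  inv_mem' := by
    intro σ hσ x
    have h := hσ (σ⁻¹ x)
    have hx : σ (σ⁻¹ x) = x := σ.apply_symm_apply x
    rw [hx] at h
    simpa using neg_mem h

theorem pow_sub_pow_mem_mul_of_sub_mem {R : Type*} [CommRing R] {I J : Ideal R} {a b : R}
    {n : ℕ} (hn : (n : R) ∈ I) (hI : a - b ∈ I) (hJ : a - b ∈ J) : a ^ n - b ^ n ∈ I * J := by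
  rw [← geom_sum₂_mul]
  refine Ideal.mul_mem_mul ?_ hJ
  rw [← Ideal.Quotient.eq_zero_iff_mem] at hn ⊢
  rw [RingHom.map_geom_sum₂, Ideal.Quotient.eq.mpr hI, geom_sum₂_self,
    ← map_natCast (Ideal.Quotient.mk I), hn, zero_mul]

theorem not_dvd_natCard_units (K : Type*) [Field K] [Finite K] (p : ℕ) [CharP K p] :
    ¬ p ∣ Nat.card Kˣ := by
  have := Fintype.ofFinite K
  rw [← CharP.cast_eq_zero_iff K, Nat.card_units, Nat.cast_sub Nat.card_pos,
    Nat.card_eq_fintype_card, Nat.cast_card_eq_zero, Nat.cast_one, zero_sub, neg_eq_zero]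
  exact one_ne_zero

section LocalRing

variable {A B : Type*} [CommRing A] [CommRing B] [IsLocalRing B] [Algebra A B]

theorem ramificationGroup_antitone : Antitone (ramificationGroup A B) :=
  fun _ _ hmn _ hσ x => Ideal.pow_le_pow_right (by omega) (hσ x)

theorem residue_apply_of_mem_ramificationGroup_zero {σ : B ≃ₐ[A] B}
    (hσ : σ ∈ ramificationGroup A B 0) (x : B) : residue B (σ x) = residue B x := by
  rw [← sub_eq_zero, ← map_sub, residue_eq_zero_iff, ← pow_one (maximalIdeal B)]
  exact hσ x

theorem apply_pow_sub_pow_mem (p : ℕ) [CharP (ResidueField B) p] {n : ℕ} {τ : B ≃ₐ[A] B}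
    (hτ : τ ∈ ramificationGroup A B n) (w : B) :
    τ (w ^ p) - w ^ p ∈ maximalIdeal B ^ (n + 2) := by
  have hp : (p : B) ∈ maximalIdeal B := by
    rw [← residue_eq_zero_iff, map_natCast, CharP.cast_eq_zero]
  rw [map_pow, pow_succ' (maximalIdeal B)]
  exact pow_sub_pow_mem_mul_of_sub_mem hp (Ideal.pow_le_self n.succ_ne_zero (hτ w)) (hτ w)

end LocalRing

section DiscreteValuationRing

variable {A B : Type*} [CommRing A] [CommRing B] [IsDomain B] [IsDiscreteValuationRing B]
  [Algebra A B] {π : B}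

theorem Irreducible.mem_maximalIdeal_pow_iff (hπ : Irreducible π) {k : ℕ} {x : B} :
    x ∈ maximalIdeal B ^ k ↔ π ^ k ∣ x := by
  rw [hπ.maximalIdeal_eq, Ideal.span_singleton_pow, Ideal.mem_span_singleton]

theorem apply_sub_self_mem_of_mem_maximalIdeal (hπ : Irreducible π) {n : ℕ} {τ : B ≃ₐ[A] B}
    (hτ : τ ∈ ramificationGroup A B n) (hπτ : τ π - π ∈ maximalIdeal B ^ (n + 2))
    {y : B} (hy : y ∈ maximalIdeal B) : τ y - y ∈ maximalIdeal B ^ (n + 2) := by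
  obtain ⟨b, rfl⟩ := (hπ.mem_maximalIdeal_pow_iff (k := 1)).mp (by rwa [pow_one])
  have hsplit : τ (π ^ 1 * b) - π ^ 1 * b = τ b * (τ π - π) + π * (τ b - b) := by
    rw [map_mul, map_pow]; ring
  rw [hsplit]
  refine add_mem (Ideal.mul_mem_left _ _ hπτ) ?_
  rw [pow_succ']
  exact Ideal.mul_mem_mul ((mem_maximalIdeal π).mpr hπ.not_isUnit) (hτ b)

/-- Over a perfect residue field every element is a `p`-th power modulo `𝔪`, so the
congruence `τ x ≡ x mod 𝔪^(n+2)` spreads from `π` and the `p`-th powers to all of `B`. -/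
theorem mem_ramificationGroup_succ_of_apply_sub_mem (p : ℕ) [Fact p.Prime]
    [CharP (ResidueField B) p] [PerfectRing (ResidueField B) p] (hπ : Irreducible π) {n : ℕ}
    {τ : B ≃ₐ[A] B} (hτ : τ ∈ ramificationGroup A B n)
    (hπτ : τ π - π ∈ maximalIdeal B ^ (n + 2)) : τ ∈ ramificationGroup A B (n + 1) := by
  intro x
  obtain ⟨w, hw⟩ : ∃ w : B, residue B (w ^ p) = residue B x := by
    obtain ⟨w', hw'⟩ := surjective_frobenius (ResidueField B) p (residue B x)
    obtain ⟨w, rfl⟩ := residue_surjective w'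
    exact ⟨w, by rwa [map_pow]⟩
  have hxw : x - w ^ p ∈ maximalIdeal B := by
    rw [← residue_eq_zero_iff, map_sub, hw, sub_self]
  have hsplit : τ x - x = (τ (w ^ p) - w ^ p) + (τ (x - w ^ p) - (x - w ^ p)) := by
    rw [map_sub]; ring
  rw [hsplit]
  exact add_mem (apply_pow_sub_pow_mem p hτ w)
    (apply_sub_self_mem_of_mem_maximalIdeal hπ hτ hπτ hxw)

theorem Irreducible.dvd_algEquiv_apply (hπ : Irreducible π) (σ : B ≃ₐ[A] B) : π ∣ σ π := by
  have hσπ : σ π ∈ maximalIdeal B ^ 1 :=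
    ram_aux σ 1 π (by rw [pow_one]; exact (mem_maximalIdeal π).mpr hπ.not_isUnit)
  simpa using hπ.mem_maximalIdeal_pow_iff.mp hσπ

noncomputable def uniformizerRatio (hπ : Irreducible π) (σ : B ≃ₐ[A] B) : B :=
  (hπ.dvd_algEquiv_apply σ).choose

theorem apply_uniformizer_eq (hπ : Irreducible π) (σ : B ≃ₐ[A] B) :
    σ π = π * uniformizerRatio hπ σ :=
  (hπ.dvd_algEquiv_apply σ).choose_spec

theorem uniformizerRatio_mul (hπ : Irreducible π) (σ τ : B ≃ₐ[A] B) :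
    uniformizerRatio hπ (σ * τ) = uniformizerRatio hπ σ * σ (uniformizerRatio hπ τ) := by
  refine mul_left_cancel₀ hπ.ne_zero ?_
  rw [← apply_uniformizer_eq, AlgEquiv.mul_apply, apply_uniformizer_eq hπ τ, map_mul,
    apply_uniformizer_eq hπ σ, mul_assoc]

theorem uniformizerRatio_one (hπ : Irreducible π) : uniformizerRatio hπ (1 : B ≃ₐ[A] B) = 1 :=
  mul_left_cancel₀ hπ.ne_zero <| by rw [← apply_uniformizer_eq, mul_one]; rfl

theorem isUnit_uniformizerRatio (hπ : Irreducible π) (σ : B ≃ₐ[A] B) :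
    IsUnit (uniformizerRatio hπ σ) :=
  .of_mul_eq_one _ <| by rw [← uniformizerRatio_mul, mul_inv_cancel, uniformizerRatio_one]

theorem uniformizerRatio_mul_eq_of_commute (hπ : Irreducible π) {σ τ : B ≃ₐ[A] B}
    (h : σ * τ = τ * σ) :
    uniformizerRatio hπ σ * σ (uniformizerRatio hπ τ) =
      uniformizerRatio hπ τ * τ (uniformizerRatio hπ σ) := by
  rw [← uniformizerRatio_mul, h, uniformizerRatio_mul]

theorem apply_uniformizer_sub_mem_iff (hπ : Irreducible π) (σ : B ≃ₐ[A] B) (k : ℕ) :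
    σ π - π ∈ maximalIdeal B ^ (k + 1) ↔ uniformizerRatio hπ σ - 1 ∈ maximalIdeal B ^ k := by
  rw [hπ.mem_maximalIdeal_pow_iff, hπ.mem_maximalIdeal_pow_iff, apply_uniformizer_eq hπ σ,
    ← mul_sub_one, pow_succ', mul_dvd_mul_iff_left hπ.ne_zero]

theorem uniformizerRatio_sub_one_mem (hπ : Irreducible π) {n : ℕ} {σ : B ≃ₐ[A] B}
    (hσ : σ ∈ ramificationGroup A B n) : uniformizerRatio hπ σ - 1 ∈ maximalIdeal B ^ n :=
  (apply_uniformizer_sub_mem_iff hπ σ n).mp (hσ π)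

theorem uniformizerRatio_sub_one_notMem (p : ℕ) [Fact p.Prime] [CharP (ResidueField B) p]
    [PerfectRing (ResidueField B) p] (hπ : Irreducible π) {n : ℕ} {σ : B ≃ₐ[A] B}
    (hσ : σ ∈ ramificationGroup A B n) (hσ' : σ ∉ ramificationGroup A B (n + 1)) :
    uniformizerRatio hπ σ - 1 ∉ maximalIdeal B ^ (n + 1) := fun h =>
  hσ' <| mem_ramificationGroup_succ_of_apply_sub_mem p hπ hσ <|
    (apply_uniformizer_sub_mem_iff hπ σ (n + 1)).mpr h

end DiscreteValuationRing

section TameCharacter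

variable (A : Type*) {B : Type*} [CommRing A] [CommRing B] [IsDomain B]
  [IsDiscreteValuationRing B] [Algebra A B] {π : B}

/-- Serre's `θ₀ : G₀ → kˣ`. -/
noncomputable def tameCharacter (hπ : Irreducible π) :
    ramificationGroup A B 0 →* (ResidueField B)ˣ :=
  MonoidHom.mk' (fun σ => ((isUnit_uniformizerRatio hπ σ.1).map (residue B)).unit) fun σ τ => by
    ext
    simp only [IsUnit.unit_spec, Units.val_mul, Subgroup.coe_mul, uniformizerRatio_mul, map_mul,
      residue_apply_of_mem_ramificationGroup_zero σ.2]

variable {A}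

theorem tameCharacter_apply (hπ : Irreducible π) (σ : ramificationGroup A B 0) :
    (tameCharacter A hπ σ : ResidueField B) = residue B (uniformizerRatio hπ σ.1) :=
  IsUnit.unit_spec _

theorem tameCharacter_eq_one_iff (p : ℕ) [Fact p.Prime] [CharP (ResidueField B) p]
    [PerfectRing (ResidueField B) p] (hπ : Irreducible π) (σ : ramificationGroup A B 0) :
    tameCharacter A hπ σ = 1 ↔ σ.1 ∈ ramificationGroup A B 1 := by
  have hratio : tameCharacter A hπ σ = 1 ↔ σ.1 π - π ∈ maximalIdeal B ^ (0 + 2) := by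
    rw [apply_uniformizer_sub_mem_iff, Units.ext_iff, tameCharacter_apply, Units.val_one,
      pow_one, ← residue_eq_zero_iff, map_sub, map_one, sub_eq_zero]
  rw [hratio]
  exact ⟨mem_ramificationGroup_succ_of_apply_sub_mem p hπ σ.2, fun h => h π⟩

theorem ker_tameCharacter (p : ℕ) [Fact p.Prime] [CharP (ResidueField B) p]
    [PerfectRing (ResidueField B) p] (hπ : Irreducible π) :
    (tameCharacter A hπ).ker =
      (ramificationGroup A B 1).subgroupOf (ramificationGroup A B 0) := by
  ext σ
  exact tameCharacter_eq_one_iff p hπ σ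

theorem card_ramificationGroup_zero (p : ℕ) [Fact p.Prime] [CharP (ResidueField B) p]
    [PerfectRing (ResidueField B) p] (hπ : Irreducible π) :
    Nat.card (ramificationGroup A B 0) =
      Nat.card (tameCharacter A hπ).range * Nat.card (ramificationGroup A B 1) := by
  rw [← (tameCharacter A hπ).ker.card_mul_index, Subgroup.index_ker, mul_comm,
    ker_tameCharacter p hπ, Nat.card_congr
      (Subgroup.subgroupOfEquivOfLe (ramificationGroup_antitone zero_le_one)).toEquiv]

/-- Serre's identity `θₙ(σ τ σ⁻¹) = θ₀(σ)ⁿ θₙ(τ)`, read modulo `π^(n+2)` on `σ(τ π) = τ(σ π)`. -/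
theorem tameCharacter_pow_eq_one_of_commute (p : ℕ) [Fact p.Prime] [CharP (ResidueField B) p]
    [PerfectRing (ResidueField B) p] (hπ : Irreducible π) {n : ℕ} {τ : B ≃ₐ[A] B}
    (hτ : τ ∈ ramificationGroup A B n) (hτ' : τ ∉ ramificationGroup A B (n + 1))
    (σ : ramificationGroup A B 0) (hστ : σ.1 * τ = τ * σ.1) : tameCharacter A hπ σ ^ n = 1 := by
  set u := uniformizerRatio hπ σ.1
  obtain ⟨c, hc⟩ := hπ.mem_maximalIdeal_pow_iff.mp (uniformizerRatio_sub_one_mem hπ hτ)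
  have hc_unit : residue B c ≠ 0 := by
    rw [Ne, residue_eq_zero_iff]
    intro hcm
    refine uniformizerRatio_sub_one_notMem p hπ hτ hτ' ?_
    rw [hc, pow_succ]
    exact Ideal.mul_mem_mul (hπ.mem_maximalIdeal_pow_iff.mpr dvd_rfl) hcm
  obtain ⟨e, he⟩ := hπ.mem_maximalIdeal_pow_iff.mp (hτ u)
  have hσc : σ.1 (uniformizerRatio hπ τ) = 1 + π ^ n * (u ^ n * σ.1 c) := by
    rw [← sub_eq_iff_eq_add', ← map_one σ.1, ← map_sub, hc, map_mul, map_pow,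
      apply_uniformizer_eq hπ σ.1, mul_pow, mul_assoc]
  have hcocycle := uniformizerRatio_mul_eq_of_commute hπ hστ
  rw [hσc, ← sub_add_cancel (uniformizerRatio hπ τ) 1, hc, ← sub_add_cancel (τ u) u, he]
    at hcocycle
  have hreduced : u ^ (n + 1) * σ.1 c - c * u - π * (e + π ^ n * c * e) = 0 := by
    refine (mul_eq_zero.mp ?_).resolve_left (pow_ne_zero n hπ.ne_zero)
    linear_combination hcocycle
  have hres := congrArg (residue B) hreduced
  simp only [map_sub, map_mul, map_pow, residue_apply_of_mem_ramificationGroup_zero σ.2,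
    (residue_eq_zero_iff π).mpr ((mem_maximalIdeal π).mpr hπ.not_isUnit), zero_mul, sub_zero,
    map_zero] at hres
  have hu_unit : residue B u ≠ 0 := ((isUnit_uniformizerRatio hπ σ.1).map (residue B)).ne_zero
  ext
  rw [Units.val_pow_eq_pow_val, tameCharacter_apply, Units.val_one]
  refine sub_eq_zero.mp <| (mul_eq_zero.mp ?_).resolve_left (mul_ne_zero hc_unit hu_unit)
  linear_combination hres

variable [Finite (ramificationGroup A B 0)]

/-- The image of `θ₀` is a finite subgroup of `kˣ`, hence cyclic: its order is its exponent. -/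
theorem card_range_tameCharacter_dvd (p : ℕ) [Fact p.Prime] [CharP (ResidueField B) p]
    [PerfectRing (ResidueField B) p] (hπ : Irreducible π)
    (habel : ∀ σ τ : B ≃ₐ[A] B, σ * τ = τ * σ) {n : ℕ} {τ : B ≃ₐ[A] B}
    (hτ : τ ∈ ramificationGroup A B n) (hτ' : τ ∉ ramificationGroup A B (n + 1)) :
    Nat.card (tameCharacter A hπ).range ∣ n := by
  have := Finite.of_surjective _ (tameCharacter A hπ).rangeRestrict_surjective
  rw [← IsCyclic.exponent_eq_card]
  refine Monoid.exponent_dvd_of_forall_pow_eq_one fun ⟨_, σ, hσ⟩ => ?_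
  subst hσ
  exact Subtype.ext (tameCharacter_pow_eq_one_of_commute p hπ hτ hτ' σ (habel σ τ))

theorem ramificationGroup_eq_succ_of_not_dvd (p : ℕ) [Fact p.Prime] [CharP (ResidueField B) p]
    [PerfectRing (ResidueField B) p] (hπ : Irreducible π)
    (habel : ∀ σ τ : B ≃ₐ[A] B, σ * τ = τ * σ) {n : ℕ}
    (hn : ¬ Nat.card (tameCharacter A hπ).range ∣ n) :
    ramificationGroup A B n = ramificationGroup A B (n + 1) :=
  le_antisymm
    (fun _ hτ => by_contra fun hτ' => hn (card_range_tameCharacter_dvd p hπ habel hτ hτ'))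
    (ramificationGroup_antitone n.le_succ)

theorem ramificationGroup_zero_eq_one_of_dvd_card (p : ℕ) [Fact p.Prime]
    [CharP (ResidueField B) p] [Finite (ResidueField B)] (hπ : Irreducible π)
    (habel : ∀ σ τ : B ≃ₐ[A] B, σ * τ = τ * σ) (hp : p ∣ Nat.card (ramificationGroup A B 0))
    (hG₂ : ramificationGroup A B 2 = ⊥) : ramificationGroup A B 0 = ramificationGroup A B 1 := by
  have hcard := card_ramificationGroup_zero p hπ (A := A)
  by_cases he₀ : Nat.card (tameCharacter A hπ).range ∣ 1
  · rw [Nat.dvd_one.mp he₀, one_mul] at hcard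
    exact (Subgroup.eq_of_le_of_card_ge (ramificationGroup_antitone zero_le_one) hcard.le).symm
  · have hG₁ : ramificationGroup A B 1 = ⊥ :=
      (ramificationGroup_eq_succ_of_not_dvd p hπ habel he₀).trans hG₂
    rw [hG₁, Subgroup.card_bot, mul_one] at hcard
    exact (not_dvd_natCard_units (ResidueField B) p
      ((hcard ▸ hp).trans (Subgroup.card_subgroup_dvd_card _))).elim

end TameCharacter

theorem stmt6_general (p : ℕ) [Fact p.Prime]
    (A B F L : Type*) [CommRing A] [CommRing B] [Field F] [Field L]
    [IsDomain B] [IsDiscreteValuationRing B]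
    [Algebra A F] [IsFractionRing A F] [Algebra B L] [IsFractionRing B L]
    [Algebra F L] [Algebra A B] [Algebra A L] [IsScalarTower A B L] [IsScalarTower A F L]
    [FiniteDimensional F L]
    [Finite (ResidueField B)]
    (hchar : CharP (ResidueField B) p)
    (habel : ∀ σ τ : B ≃ₐ[A] B, σ * τ = τ * σ) :
    (∀ n : ℕ, 1 ≤ n →
      ¬ ((Nat.card (ramificationGroup A B 0) / Nat.card (ramificationGroup A B 1)) ∣ n) →
      ramificationGroup A B n = ramificationGroup A B (n + 1)) ∧
    (p ∣ Nat.card (ramificationGroup A B 0) → ramificationGroup A B 2 = ⊥ →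
      ramificationGroup A B 0 = ramificationGroup A B 1) := by
  have : Finite (B ≃ₐ[A] B) :=
    .of_injective _ (IsFractionRing.fieldEquivOfAlgEquivHom_injective A B F L)
  obtain ⟨π, hπ⟩ := IsDiscreteValuationRing.exists_irreducible B
  have he₀ : Nat.card (ramificationGroup A B 0) / Nat.card (ramificationGroup A B 1) =
      Nat.card (tameCharacter A hπ).range := by
    rw [card_ramificationGroup_zero p hπ, Nat.mul_div_cancel _ Nat.card_pos]
  rw [he₀]
  exact ⟨fun n _ hn => ramificationGroup_eq_succ_of_not_dvd p hπ habel hn,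
    ramificationGroup_zero_eq_one_of_dvd_card p hπ habel⟩

/-- Let `L/F` be a finite abelian extension of `p`-adic fields, modelled by
an extension `B/A` of complete discrete valuation rings with finite residue fields of
characteristic `p`, with ramification groups `G_n` (lower numbering) and
`e₀ = |G₀/G₁| = |G₀|/|G₁|`.  Then `G_n = G_{n+1}` for all `n ≥ 1` not divisible by `e₀`.
In particular, if `L/F` is wildly ramified (`p ∣ |G₀|`) and weakly ramified (`G₂ = 1`),
then `G₀ = G₁`. -/
theorem stmt6 (p : ℕ) [Fact p.Prime]
    (A B F L : Type*) [CommRing A] [CommRing B] [Field F] [Field L]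
    [IsDomain A] [IsDomain B] [IsDiscreteValuationRing A] [IsDiscreteValuationRing B]
    [Algebra A F] [IsFractionRing A F] [Algebra B L] [IsFractionRing B L]
    [Algebra F L] [Algebra A B] [Algebra A L] [IsScalarTower A B L] [IsScalarTower A F L]
    [FiniteDimensional F L] [IsGalois F L] [IsIntegralClosure B A L]
    [NoZeroSMulDivisors A B]
    [IsAdicComplete (maximalIdeal A) A]
    [Finite (ResidueField A)] [Finite (ResidueField B)]
    (hchar : CharP (ResidueField B) p)
    (habel : ∀ σ τ : B ≃ₐ[A] B, σ * τ = τ * σ) :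
    (∀ n : ℕ, 1 ≤ n →
      ¬ ((Nat.card (ramificationGroup A B 0) / Nat.card (ramificationGroup A B 1)) ∣ n) →
      ramificationGroup A B n = ramificationGroup A B (n + 1)) ∧
    (p ∣ Nat.card (ramificationGroup A B 0) → ramificationGroup A B 2 = ⊥ →
      ramificationGroup A B 0 = ramificationGroup A B 1) :=
  stmt6_general p A B F L hchar habel
end

section
/- Let F be a p-adic field with p not dividing |G| for a finite abelian group G. Then the unit group (O_{F^c}[G])^× of the integral group algebra over the ring of integers of the algebraic closure equals Hom(ℤ[Ĝ], O_{F^c}^×) under the character-evaluation identification of (F^c[G])^× with Hom(ℤ[Ĝ], (F^c)^×). -/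
/-!
Evaluation at all characters is a ring homomorphism `O[G] → ∏_χ C` whose image lies in `∏_χ O`,
because character values are roots of unity and a valuation ring is integrally closed. Since
`|G|` is invertible in `O` and `C` has enough roots of unity, orthogonality of characters makes
this map injective, and Fourier inversion `a(t) = |G|⁻¹ ∑_χ φ(χ) χ(t⁻¹)` shows that every family
with values in `O` is hit. Hence `φ` with values in `Oˣ` comes from `x, y ∈ O[G]` evaluating to
`φ` and `φ⁻¹`, and injectivity gives `x * y = 1`.
-/

open Finset

theorem ValuationSubring.mem_of_pow_eq_one {K : Type*} [Field K] (O : ValuationSubring K) {x : K}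
    {n : ℕ} (hn : n ≠ 0) (hx : x ^ n = 1) : x ∈ O := by
  have hint : IsIntegral O x := .of_pow (Nat.pos_of_ne_zero hn) (hx ▸ isIntegral_one)
  obtain ⟨y, rfl⟩ := IsIntegrallyClosed.isIntegral_iff.mp hint
  exact y.2

theorem ValuationSubring.monoidHom_apply_mem {K : Type*} [Field K] (O : ValuationSubring K)
    {G : Type*} [Group G] [Fintype G] (χ : G →* Kˣ) (s : G) : (χ s : K) ∈ O :=
  O.mem_of_pow_eq_one Fintype.card_ne_zero <| by
    rw [← Units.val_pow_eq_pow_val, ← map_pow, pow_card_eq_one, map_one, Units.val_one]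

theorem Units.coeHom_comp_eq_one_iff {M N : Type*} [Monoid M] [Monoid N] {f : M →* Nˣ} :
    (Units.coeHom N).comp f = 1 ↔ f = 1 := by
  rw [← MonoidHom.comp_one (Units.coeHom N), MonoidHom.cancel_left Units.val_injective]

section Orthogonality

variable {C : Type*} [CommRing C] [IsDomain C] {G : Type*} [CommGroup G] [Fintype G]

theorem sum_apply_mul_apply_inv [DecidableEq (G →* Cˣ)] (χ ψ : G →* Cˣ) :
    ∑ s, (χ s : C) * (ψ s⁻¹ : C) = if χ = ψ then (Fintype.card G : C) else 0 := by
  split_ifs with h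
  · simp [h]
  · have hne : (Units.coeHom C).comp (χ * ψ⁻¹) ≠ 1 := by
      rw [Ne, Units.coeHom_comp_eq_one_iff]
      exact fun h1 ↦ h (mul_inv_eq_one.mp h1)
    simpa using sum_hom_units_eq_zero _ hne

theorem sum_char_apply_mul_apply_inv [Fintype (G →* Cˣ)]
    [HasEnoughRootsOfUnity C (Monoid.exponent G)] [DecidableEq G] (s t : G) :
    ∑ χ : G →* Cˣ, (χ s : C) * (χ t⁻¹ : C) = if s = t then (Fintype.card G : C) else 0 := by
  split_ifs with h
  · simp [h, Fintype.card_congr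
      (CommGroup.monoidHom_mulEquiv_of_hasEnoughRootsOfUnity G C).some.toEquiv]
  · have hne : (Units.coeHom C).comp (MonoidHom.eval (s * t⁻¹) : (G →* Cˣ) →* Cˣ) ≠ 1 := by
      rw [Ne, Units.coeHom_comp_eq_one_iff]
      intro h1
      refine h (mul_inv_eq_one.mp ((CommGroup.forall_apply_eq_apply_iff G (M := C)).mp fun χ ↦ ?_))
      simpa using DFunLike.congr_fun h1 χ
    simpa using sum_hom_units_eq_zero _ hne

end Orthogonality

theorem sum_fourierInv_mul_apply {C : Type*} [Field C] {G : Type*} [CommGroup G] [Fintype G]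
    [Fintype (G →* Cˣ)] (hn : (Fintype.card G : C) ≠ 0)
    (c : (G →* Cˣ) → C) (χ : G →* Cˣ) :
    ∑ t, ((Fintype.card G : C)⁻¹ * ∑ ψ, c ψ * (ψ t⁻¹ : C)) * (χ t : C) = c χ := by
  classical
  calc _ = (Fintype.card G : C)⁻¹ * ∑ ψ, c ψ * ∑ t, (χ t : C) * (ψ t⁻¹ : C) := by
        simp only [mul_sum, sum_mul]
        rw [sum_comm]
        exact sum_congr rfl fun ψ _ ↦ sum_congr rfl fun t _ ↦ by ring
    _ = c χ := by
        simp_rw [sum_apply_mul_apply_inv, mul_ite, mul_zero, sum_ite_eq, mem_univ, if_true]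
        field_simp

section CharEval

variable {C : Type*} [Field C] {S : Type*} [SetLike S C] [SubringClass S C] (O : S)
  {G : Type*} [CommGroup G] [Fintype G]

theorem inv_coe_mem_of_isUnit {x : O} (hx : IsUnit x) : (x : C)⁻¹ ∈ O := by
  obtain ⟨u, rfl⟩ := hx
  convert ((u⁻¹ : Oˣ) : O).2 using 1
  exact (map_units_inv (SubringClass.subtype O) u).symm

theorem natCast_ne_zero_of_isUnit {n : ℕ} (hn : IsUnit (n : O)) : (n : C) ≠ 0 := by
  simpa using (hn.map (SubringClass.subtype O)).ne_zero

noncomputable def charEval (χ : G →* Cˣ) : MonoidAlgebra O G →+* C :=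
  MonoidAlgebra.liftNCRingHom (SubringClass.subtype O) ((Units.coeHom C).comp χ)
    fun _ _ ↦ Commute.all _ _

theorem charEval_apply (χ : G →* Cˣ) (x : MonoidAlgebra O G) :
    charEval O χ x = ∑ s, (x.coeff s : C) * (χ s : C) := by
  conv_lhs => rw [← MonoidAlgebra.sum_coeff_single x, map_finsuppSum]
  rw [Finsupp.sum_fintype _ _ fun s ↦ by simp]
  simp [charEval]

theorem charEval_mem {χ : G →* Cˣ} (hχ : ∀ s, (χ s : C) ∈ O) (x : MonoidAlgebra O G) :
    charEval O χ x ∈ O := by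
  rw [charEval_apply]
  exact sum_mem fun s _ ↦ mul_mem (x.coeff s).2 (hχ s)

variable [Fintype (G →* Cˣ)]

theorem sum_charEval_mul_apply_inv [HasEnoughRootsOfUnity C (Monoid.exponent G)]
    (x : MonoidAlgebra O G) (t : G) :
    ∑ χ : G →* Cˣ, charEval O χ x * (χ t⁻¹ : C) = Fintype.card G * (x.coeff t : C) := by
  classical
  calc _ = ∑ s, (x.coeff s : C) * ∑ χ : G →* Cˣ, (χ s : C) * (χ t⁻¹ : C) := by
        simp only [charEval_apply, sum_mul, mul_sum]
        rw [sum_comm]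
        exact sum_congr rfl fun s _ ↦ sum_congr rfl fun χ _ ↦ by ring
    _ = _ := by
        simp_rw [sum_char_apply_mul_apply_inv, mul_ite, mul_zero, sum_ite_eq', mem_univ, if_true,
          mul_comm]

theorem charEval_injective [HasEnoughRootsOfUnity C (Monoid.exponent G)]
    (hn : (Fintype.card G : C) ≠ 0) {x y : MonoidAlgebra O G}
    (h : ∀ χ : G →* Cˣ, charEval O χ x = charEval O χ y) : x = y := by
  ext t
  refine mul_left_cancel₀ hn ?_
  simp only [← sum_charEval_mul_apply_inv, h]

theorem exists_charEval_eq (hG : IsUnit (Fintype.card G : O))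
    (hχ : ∀ (χ : G →* Cˣ) s, (χ s : C) ∈ O) (c : (G →* Cˣ) → C) (hc : ∀ χ, c χ ∈ O) :
    ∃ x : MonoidAlgebra O G, ∀ χ, charEval O χ x = c χ := by
  have hinv : (Fintype.card G : C)⁻¹ ∈ O := by simpa using inv_coe_mem_of_isUnit O hG
  let a (t : G) : O := ⟨(Fintype.card G : C)⁻¹ * ∑ ψ, c ψ * (ψ t⁻¹ : C),
    mul_mem hinv (sum_mem fun ψ _ ↦ mul_mem (hc ψ) (hχ ψ t⁻¹))⟩
  refine ⟨.ofCoeff (Finsupp.equivFunOnFinite.symm a), fun χ ↦ ?_⟩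
  rw [charEval_apply]
  exact sum_fourierInv_mul_apply (natCast_ne_zero_of_isUnit O hG) c χ

theorem exists_unit_charEval_eq [HasEnoughRootsOfUnity C (Monoid.exponent G)]
    (hG : IsUnit (Fintype.card G : O)) (hχ : ∀ (χ : G →* Cˣ) s, (χ s : C) ∈ O)
    (c : (G →* Cˣ) → Cˣ) (hc : ∀ χ, (c χ : C) ∈ O ∧ (((c χ)⁻¹ : Cˣ) : C) ∈ O) :
    ∃ u : (MonoidAlgebra O G)ˣ, ∀ χ, charEval O χ u = c χ := by
  obtain ⟨a, ha⟩ := exists_charEval_eq O hG hχ (fun χ ↦ c χ) fun χ ↦ (hc χ).1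
  obtain ⟨b, hb⟩ := exists_charEval_eq O hG hχ (fun χ ↦ ((c χ)⁻¹ : Cˣ)) fun χ ↦ (hc χ).2
  have hab : a * b = 1 :=
    charEval_injective O (natCast_ne_zero_of_isUnit O hG) fun χ ↦ by simp [ha, hb]
  exact ⟨⟨a, b, hab, mul_comm b a ▸ hab⟩, ha⟩

end CharEval

theorem stmt10_general (C : Type*) [Field C] [IsAlgClosed C]
    (O : ValuationSubring C)
    (G : Type*) [CommGroup G] [Fintype G] [Fintype (G →* Cˣ)]
    (hG : IsUnit ((Fintype.card G : ℕ) : O))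
    (φ : (G →* Cˣ) → Cˣ) :
    (∀ χ : G →* Cˣ, ((φ χ : Cˣ) : C) ∈ O ∧ (((φ χ)⁻¹ : Cˣ) : C) ∈ O) ↔
      ∃ u : (MonoidAlgebra O G)ˣ, ∀ χ : G →* Cˣ,
        ((φ χ : Cˣ) : C) = ∑ s : G, (((u : MonoidAlgebra O G).coeff s : O) : C) * (χ s : C) := by
  have : NeZero (Monoid.exponent G : C) := by
    obtain ⟨k, hk⟩ := Group.exponent_dvd_card (G := G)
    refine ⟨fun h ↦ natCast_ne_zero_of_isUnit O hG ?_⟩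
    rw [hk, Nat.cast_mul, h, zero_mul]
  have hχ := O.monoidHom_apply_mem (G := G)
  simp_rw [← charEval_apply]
  constructor
  · intro h
    obtain ⟨u, hu⟩ := exists_unit_charEval_eq O hG hχ φ h
    exact ⟨u, fun χ ↦ (hu χ).symm⟩
  · rintro ⟨u, hu⟩ χ
    rw [hu χ, Units.val_inv_eq_inv_val, hu χ, ← map_units_inv]
    exact ⟨charEval_mem O (hχ χ) _, charEval_mem O (hχ χ) _⟩

/-- Let `C` be an algebraically closed field of characteristic `0` equipped
with a valuation subring `O` (the valuation ring of `F^c` for a `p`-adic field `F`), and `G` a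
finite abelian group whose order is a unit in `O` (i.e. `p ∤ |G|`).  Under the identification
of `(C[G])ˣ` with `Hom(ℤ[Ĝ], Cˣ)` by character evaluation, the units of `O[G]` are exactly the
homomorphisms with values in `Oˣ`: a family `φ : Ĝ → Cˣ` has all values and inverse values in
`O` iff it is the character-evaluation of a unit of `O[G]`. -/
theorem stmt10 (C : Type*) [Field C] [IsAlgClosed C] [CharZero C]
    (O : ValuationSubring C)
    (G : Type*) [CommGroup G] [Fintype G] [Fintype (G →* Cˣ)]
    (hG : IsUnit ((Fintype.card G : ℕ) : O))
    (φ : (G →* Cˣ) → Cˣ) :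
    (∀ χ : G →* Cˣ, ((φ χ : Cˣ) : C) ∈ O ∧ (((φ χ)⁻¹ : Cˣ) : C) ∈ O) ↔
      ∃ u : (MonoidAlgebra O G)ˣ, ∀ χ : G →* Cˣ,
        ((φ χ : Cˣ) : C) = ∑ s : G, (((u : MonoidAlgebra O G).coeff s : O) : C) * (χ s : C) :=
  stmt10_general C O G hG φ
end

section
/- Let F be a p-adic field of odd residue characteristic, G a finite abelian group of odd order, e an integer dividing q_F - 1 with gcd(e,p)=1, and L = F(π^{1/e}) the totally ramified Kummer extension of degree e obtained by adjoining an e-th root of a uniformizer π. Set Π = π^{1/e}. Then the element α = (1/e) Σ_{k=0}^{e-1} Π^{k + (1-e)/2} generates the square root of the inverse different A_{L/F} freely as a module over O_F[Gal(L/F)]; that is, A_{L/F} = O_F[Gal(L/F)]·α. -/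
/-!
Put `t = (e - 1) / 2`. The elements `ϖ ^ (k - t)`, `0 ≤ k < e`, form an `F`-basis of `L`, and
since `v(Fˣ) = eℤ` the nonzero terms of any `F`-combination of them have pairwise distinct
valuations; hence such a combination lies in `ϖ ^ (-t) O_L` exactly when its coefficients lie in
`O_F`. The automorphism `σ₀ ^ i` scales `ϖ ^ (k - t)` by `ζ ^ (i (k - t))`, so the conjugates of
`α` are the discrete Fourier transform of this basis, divided by `e`. As `e` is a unit, the
orthogonality of the characters `k ↦ ζ ^ (i k)` inverts this transform over `O_F`.
-/

open Multiplicative Finset WithZero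

namespace Valuation

variable {R Γ₀ : Type*} [Ring R] [LinearOrderedCommMonoidWithZero Γ₀] (v : Valuation R Γ₀)

lemma map_le_map_sum_of_pairwise_ne {ι : Type*} [Fintype ι] {f : ι → R}
    (hf : ∀ i j, i ≠ j → f i ≠ 0 → v (f i) ≠ v (f j)) (j : ι) :
    v (f j) ≤ v (∑ i, f i) := by
  classical
  obtain ⟨m, -, hm⟩ := univ.exists_max_image (v ∘ f) ⟨j, mem_univ j⟩
  by_cases hm0 : f m = 0
  · exact ((hm j (mem_univ j)).trans (by simp [hm0])).trans zero_le
  · rw [v.map_sum_eq_of_lt (mem_univ m) fun i hi ↦ ?_]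
    · exact hm j (mem_univ j)
    · have him : i ≠ m := by simpa using hi
      exact (hm i (mem_univ i)).lt_of_ne (hf m i him.symm hm0).symm

lemma map_eq_one_of_pow_eq_one [IsMulTorsionFree Γ₀] {x : R} {n : ℕ} (hn : n ≠ 0)
    (hx : x ^ n = 1) : v x = 1 :=
  (pow_eq_one_iff_left hn).mp (by rw [← map_pow, hx, map_one])

end Valuation

lemma IsPrimitiveRoot.sum_zpow_mul_sub {K : Type*} [Field K] {β : K} {e : ℕ}
    (hβ : IsPrimitiveRoot β e) (j k : Fin e) :
    ∑ i : Fin e, β ^ ((i : ℤ) * ((k : ℤ) - j)) = if j = k then (e : K) else 0 := by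
  have hgeom : ∑ i : Fin e, β ^ ((i : ℤ) * ((k : ℤ) - j)) =
      ∑ i ∈ range e, (β ^ ((k : ℤ) - j)) ^ i := by
    rw [← Fin.sum_univ_eq_sum_range]
    exact sum_congr rfl fun i _ ↦ by rw [mul_comm, zpow_mul, zpow_natCast]
  split_ifs with hjk
  · simp [hjk]
  · have hne : β ^ ((k : ℤ) - j) ≠ 1 := fun h1 ↦ hjk <| Fin.ext <| by
      have := Int.eq_zero_of_abs_lt_dvd ((hβ.zpow_eq_one_iff_dvd _).mp h1)
        (abs_sub_lt_iff.mpr ⟨by omega, by omega⟩)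
      omega
    rw [hgeom, geom_sum_eq hne, ← zpow_natCast, ← zpow_mul, mul_comm, zpow_mul,
      zpow_natCast, hβ.pow_eq_one, one_zpow, sub_self, zero_div]

lemma IsPrimitiveRoot.sum_invDft_mul_dft {K : Type*} [Field K] {β : K} {e : ℕ}
    (hβ : IsPrimitiveRoot β e) (t : ℤ) (a y : Fin e → K) :
    ∑ i : Fin e, (∑ j : Fin e, a j * β ^ (-((i : ℤ) * (j - t)))) *
      ((e : K)⁻¹ * ∑ k : Fin e, β ^ ((i : ℤ) * (k - t)) * y k) = ∑ k, a k * y k := by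
  rcases Nat.eq_zero_or_pos e with rfl | hpos
  · simp
  have : NeZero e := ⟨hpos.ne'⟩
  have he : (e : K) ≠ 0 := hβ.neZero'.out
  have hβ0 : β ≠ 0 := hβ.ne_zero hpos.ne'
  calc _ = ∑ k, ∑ j, ∑ i : Fin e,
        (e : K)⁻¹ * a j * y k * β ^ ((i : ℤ) * ((k : ℤ) - j)) := by
        simp only [mul_sum, sum_mul]
        refine sum_comm.trans <| sum_congr rfl fun k _ ↦ sum_comm.trans ?_
        refine sum_congr rfl fun j _ ↦ sum_congr rfl fun i _ ↦ ?_
        rw [show (i : ℤ) * ((k : ℤ) - j) = -((i : ℤ) * (j - t)) + i * (k - t) by ring,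
          zpow_add₀ hβ0]
        ring
    _ = ∑ k, a k * y k := by
        simp only [← mul_sum, hβ.sum_zpow_mul_sub, mul_ite, mul_zero, sum_ite_eq', mem_univ,
          if_true]
        exact sum_congr rfl fun k _ ↦ by field_simp

section AlgEquiv

variable {F L : Type*} [Field F] [Field L] [Algebra F L]

lemma AlgEquiv.pow_apply_of_apply_eq {σ : L ≃ₐ[F] L} {x : L} {ζ : F}
    (h : σ x = algebraMap F L ζ * x) (i : ℕ) : (σ ^ i) x = algebraMap F L (ζ ^ i) * x := by
  induction i with
  | zero => simp
  | succ n ih =>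
    rw [pow_succ', AlgEquiv.mul_apply, ih, map_mul, AlgEquiv.commutes, h, pow_succ', map_mul]
    ring

lemma AlgEquiv.pow_apply_zpow_of_apply_eq {σ : L ≃ₐ[F] L} {x : L} {ζ : F}
    (h : σ x = algebraMap F L ζ * x) (i : ℕ) (z : ℤ) :
    (σ ^ i) (x ^ z) = algebraMap F L ζ ^ ((i : ℤ) * z) * x ^ z := by
  rw [map_zpow₀, AlgEquiv.pow_apply_of_apply_eq h, mul_zpow, map_pow, zpow_mul, zpow_natCast]

lemma AlgEquiv.bijective_pow_of_apply_eq [FiniteDimensional F L] [IsGalois F L] {e : ℕ}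
    (hfinrank : Module.finrank F L = e) {σ : L ≃ₐ[F] L} {x : L} (hx : x ≠ 0) {ζ : F}
    (hζ : IsPrimitiveRoot ζ e) (h : σ x = algebraMap F L ζ * x) :
    Function.Bijective fun i : Fin e ↦ σ ^ (i : ℕ) := by
  refine (Fintype.bijective_iff_injective_and_card _).mpr ⟨fun i j hij ↦ ?_, ?_⟩
  · have hx' := congrArg (· x) hij
    simp only [AlgEquiv.pow_apply_of_apply_eq h] at hx'
    exact Fin.ext <| hζ.pow_inj i.isLt j.isLt <|
      (algebraMap F L).injective (mul_right_cancel₀ hx hx')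
  · rw [Fintype.card_fin, ← Nat.card_eq_fintype_card, IsGalois.card_aut_eq_finrank, hfinrank]

end AlgEquiv

section IntegralCombinations

variable (F : Type*) {L Γ₀ : Type*} [Field F] [Field L] [Algebra F L]
  [LinearOrderedCommMonoidWithZero Γ₀] (v : Valuation L Γ₀) {ι κ : Type*} [Fintype ι] [Fintype κ]

/-- The `O_F`-module spanned by `g`, where `O_F = {c : F | v c ≤ 1}`. -/
def integralCombinations (g : ι → L) : Set L :=
  {x | ∃ c : ι → F, (∀ i, v (algebraMap F L (c i)) ≤ 1) ∧ x = ∑ i, algebraMap F L (c i) * g i}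

variable {F v}

lemma integralCombinations_comp_equiv (E : ι ≃ κ) (g : κ → L) :
    integralCombinations F v (g ∘ E) = integralCombinations F v g := by
  ext x
  constructor
  · rintro ⟨c, hc, rfl⟩
    exact ⟨c ∘ E.symm, fun _ ↦ hc _, by rw [← E.sum_comp]; simp⟩
  · rintro ⟨c, hc, rfl⟩
    exact ⟨c ∘ E, fun _ ↦ hc _, (E.sum_comp fun k ↦ algebraMap F L (c k) * g k).symm⟩

lemma integralCombinations_subset {g : ι → L} {γ : Γ₀} (hg : ∀ i, v (g i) ≤ γ) :
    integralCombinations F v g ⊆ {x | v x ≤ γ} := by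
  rintro _ ⟨c, hc, rfl⟩
  exact v.map_sum_le fun i _ ↦ by
    rw [map_mul]
    exact (mul_le_mul' (hc i) (hg i)).trans_eq (one_mul _)

end IntegralCombinations

section Kummer

variable {F L : Type*} [Field F] [Field L] [Algebra F L] {v : Valuation L ℤᵐ⁰} {e : ℕ} {ϖ : L}
  (hϖ : v ϖ = exp (-1)) (hF : ∀ c : F, c ≠ 0 → ∃ k : ℤ, v (algebraMap F L c) = exp (e * k))
include hϖ

lemma valuation_zpow_of_eq_exp_neg_one (z : ℤ) : v (ϖ ^ z) = exp (-z) := by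
  rw [map_zpow₀, hϖ, ← exp_zsmul, smul_eq_mul, mul_neg_one]

include hF

lemma exists_valuation_algebraMap_mul_zpow {c : F} (hc : c ≠ 0) (z : ℤ) :
    ∃ k : ℤ, v (algebraMap F L c * ϖ ^ z) = exp (e * k - z) := by
  obtain ⟨k, hk⟩ := hF c hc
  exact ⟨k, by rw [map_mul, hk, valuation_zpow_of_eq_exp_neg_one hϖ, ← exp_add, sub_eq_add_neg]⟩

lemma valuation_algebraMap_mul_zpow_sub_ne (t : ℤ) {c c' : F} (hc : c ≠ 0) {i j : Fin e}
    (hij : i ≠ j) :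
    v (algebraMap F L c * ϖ ^ ((i : ℤ) - t)) ≠ v (algebraMap F L c' * ϖ ^ ((j : ℤ) - t)) := by
  obtain ⟨k, hk⟩ := exists_valuation_algebraMap_mul_zpow hϖ hF hc ((i : ℤ) - t)
  rcases eq_or_ne c' 0 with rfl | hc'
  · simp [hk]
  obtain ⟨k', hk'⟩ := exists_valuation_algebraMap_mul_zpow hϖ hF hc' ((j : ℤ) - t)
  rw [hk, hk', Ne, exp_inj]
  intro h
  have := Int.eq_zero_of_abs_lt_dvd (m := e) (x := (i : ℤ) - j)
    ⟨k - k', by rw [mul_sub]; linarith⟩ (abs_sub_lt_iff.mpr ⟨by omega, by omega⟩)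
  exact hij (Fin.ext (by omega))

lemma valuation_le_valuation_sum_zpow_sub (t : ℤ) (a : Fin e → F) (j : Fin e) :
    v (algebraMap F L (a j) * ϖ ^ ((j : ℤ) - t)) ≤
      v (∑ i : Fin e, algebraMap F L (a i) * ϖ ^ ((i : ℤ) - t)) :=
  v.map_le_map_sum_of_pairwise_ne (fun _ _ hij hi ↦ valuation_algebraMap_mul_zpow_sub_ne hϖ hF t
    ((map_ne_zero _).mp (left_ne_zero_of_mul hi)) hij) j

lemma linearIndependent_zpow_sub (t : ℤ) :
    LinearIndependent F fun j : Fin e ↦ ϖ ^ ((j : ℤ) - t) := by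
  have hϖ0 : ϖ ≠ 0 := v.ne_zero_iff.mp (hϖ ▸ exp_ne_zero)
  refine Fintype.linearIndependent_iff.mpr fun a ha j ↦ ?_
  simp only [Algebra.smul_def] at ha
  have hj := valuation_le_valuation_sum_zpow_sub hϖ hF t a j
  rw [ha, map_zero, le_zero_iff, map_eq_zero, mul_eq_zero,
    map_eq_zero_iff _ (algebraMap F L).injective] at hj
  exact hj.resolve_right (zpow_ne_zero _ hϖ0)

lemma valuation_algebraMap_le_one_of_valuation_sum_le {t : ℤ} {a : Fin e → F}
    (h : v (∑ i : Fin e, algebraMap F L (a i) * ϖ ^ ((i : ℤ) - t)) ≤ exp t) (j : Fin e) :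
    v (algebraMap F L (a j)) ≤ 1 := by
  rcases eq_or_ne (a j) 0 with hj | hj
  · simp [hj]
  obtain ⟨k, hk⟩ := hF _ hj
  have hle := (valuation_le_valuation_sum_zpow_sub hϖ hF t a j).trans h
  rw [map_mul, hk, valuation_zpow_of_eq_exp_neg_one hϖ, ← exp_add, exp_le_exp] at hle
  have hk0 : k ≤ 0 := by
    by_contra! hk0
    nlinarith [j.isLt]
  rw [hk, ← exp_zero, exp_le_exp]
  nlinarith

lemma exists_eq_sum_zpow_sub [FiniteDimensional F L] (hfinrank : Module.finrank F L = e) (t : ℤ)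
    (x : L) : ∃ a : Fin e → F, x = ∑ i : Fin e, algebraMap F L (a i) * ϖ ^ ((i : ℤ) - t) := by
  have hspan := (linearIndependent_zpow_sub hϖ hF t).span_eq_top_of_card_eq_finrank'
    (by rw [Fintype.card_fin, hfinrank])
  obtain ⟨a, ha⟩ :=
    Submodule.mem_span_range_iff_exists_fun F |>.mp (hspan ▸ Submodule.mem_top (x := x))
  exact ⟨a, by simp only [← ha, Algebra.smul_def]⟩

lemma integralCombinations_pow_apply_eq [FiniteDimensional F L]
    (hfinrank : Module.finrank F L = e) (he : v (e : L) = 1) {ζ : F} (hζ : IsPrimitiveRoot ζ e)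
    {σ : L ≃ₐ[F] L} (hσ : σ ϖ = algebraMap F L ζ * ϖ) (t : ℤ) :
    integralCombinations F v
        (fun i : Fin e ↦ (σ ^ (i : ℕ)) ((e : L)⁻¹ * ∑ k : Fin e, ϖ ^ ((k : ℤ) - t))) =
      {x | v x ≤ exp t} := by
  have he0 : e ≠ 0 := by rintro rfl; simp at he
  have hβ : IsPrimitiveRoot (algebraMap F L ζ) e := hζ.map_of_injective (algebraMap F L).injective
  have hvβ (z : ℤ) : v (algebraMap F L ζ ^ z) = 1 := by
    rw [map_zpow₀, v.map_eq_one_of_pow_eq_one he0 hβ.pow_eq_one, one_zpow]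
  have hconj (i : ℕ) : (σ ^ i) ((e : L)⁻¹ * ∑ k : Fin e, ϖ ^ ((k : ℤ) - t)) = (e : L)⁻¹ *
      ∑ k : Fin e, algebraMap F L ζ ^ ((i : ℤ) * ((k : ℤ) - t)) * ϖ ^ ((k : ℤ) - t) := by
    simp only [map_mul, map_inv₀, map_natCast, map_sum, AlgEquiv.pow_apply_zpow_of_apply_eq hσ]
  simp only [hconj]
  refine (integralCombinations_subset fun i ↦ ?_).antisymm fun x hx ↦ ?_
  · rw [map_mul, map_inv₀, he, inv_one, one_mul]
    refine v.map_sum_le fun k _ ↦ ?_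
    rw [map_mul, hvβ, one_mul, valuation_zpow_of_eq_exp_neg_one hϖ, exp_le_exp]
    omega
  obtain ⟨a, rfl⟩ := exists_eq_sum_zpow_sub hϖ hF hfinrank t x
  -- the coefficients of `x` transformed by the inverse discrete Fourier transform
  refine ⟨fun i ↦ ∑ j : Fin e, a j * ζ ^ (-((i : ℤ) * ((j : ℤ) - t))), fun i ↦ ?_, ?_⟩
  · rw [map_sum]
    refine v.map_sum_le fun j _ ↦ ?_
    rw [map_mul, map_mul, map_zpow₀, hvβ, mul_one]
    exact valuation_algebraMap_le_one_of_valuation_sum_le hϖ hF hx j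
  · simp only [map_sum, map_mul, map_zpow₀]
    exact (hβ.sum_invDft_mul_dft t _ _).symm

end Kummer

theorem stmt14_general (F L : Type*) [Field F] [Field L] [Algebra F L]
    [FiniteDimensional F L] [IsGalois F L]
    (v : Valuation L (WithZero (Multiplicative ℤ)))
    (e : ℕ) (he : Odd e)
    (hfinrank : Module.finrank F L = e)
    (ϖ : L) (hϖ : v ϖ = (ofAdd (-1 : ℤ) : Multiplicative ℤ))
    (htotram : ∀ c : F, c ≠ 0 → ∃ k : ℤ,
      v (algebraMap F L c) = ((ofAdd (-(e : ℤ)) : Multiplicative ℤ) : WithZero (Multiplicative ℤ)) ^ k)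
    (hetame : v ((e : L)) = 1)
    (ζ : F) (hζ : IsPrimitiveRoot ζ e)
    (σ₀ : L ≃ₐ[F] L) (hσ₀ : σ₀ ϖ = algebraMap F L ζ * ϖ)
    (α : L)
    (hα : α = (e : L)⁻¹ * ∑ k ∈ Finset.range e, ϖ ^ ((k : ℤ) + (1 - (e : ℤ)) / 2)) :
    {x : L | ∃ c : (L ≃ₐ[F] L) → F,
        (∀ ρ : L ≃ₐ[F] L, v (algebraMap F L (c ρ)) ≤ 1) ∧
        x = ∑ ρ : L ≃ₐ[F] L, algebraMap F L (c ρ) * ρ α} =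
      {x : L | v (ϖ ^ (((e : ℤ) - 1) / 2) * x) ≤ 1} := by
  obtain ⟨t, rfl⟩ := he
  have hϖ' : v ϖ = exp (-1) := hϖ
  have hϖ0 : ϖ ≠ 0 := v.ne_zero_iff.mp (hϖ' ▸ exp_ne_zero)
  have hF (c : F) (hc : c ≠ 0) :
      ∃ k : ℤ, v (algebraMap F L c) = exp (((2 * t + 1 : ℕ) : ℤ) * k) := by
    obtain ⟨k, hk⟩ := htotram c hc
    exact ⟨-k, by rw [hk, ← exp_eq_coe_ofAdd, ← exp_zsmul, smul_eq_mul]; ring_nf⟩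
  have hα' : α = ((2 * t + 1 : ℕ) : L)⁻¹ * ∑ k : Fin (2 * t + 1), ϖ ^ ((k : ℤ) - t) := by
    rw [hα, Fin.sum_univ_eq_sum_range (fun k : ℕ ↦ ϖ ^ ((k : ℤ) - t))]
    congr 2 with k
    congr 1
    omega
  let E := Equiv.ofBijective _ (σ₀.bijective_pow_of_apply_eq hfinrank hϖ0 hζ hσ₀)
  have hA : {x : L | v (ϖ ^ ((((2 * t + 1 : ℕ) : ℤ) - 1) / 2) * x) ≤ 1} =
      {x | v x ≤ exp (t : ℤ)} := by
    ext x
    rw [Set.mem_ofPred_eq, Set.mem_ofPred_eq, show (((2 * t + 1 : ℕ) : ℤ) - 1) / 2 = t by omega,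
      map_mul, valuation_zpow_of_eq_exp_neg_one hϖ', exp_neg, inv_mul_le_one₀ exp_pos]
  change integralCombinations F v (fun ρ : L ≃ₐ[F] L ↦ ρ α) = _
  rw [hA, ← integralCombinations_comp_equiv E, hα']
  exact integralCombinations_pow_apply_eq hϖ' hF hfinrank hetame hζ hσ₀ t

/-- Let `F` be a `p`-adic field with odd residue characteristic containing
the `(q_F - 1)`-st roots of unity, `e` an odd divisor of `q_F - 1` prime to `p` (so `e` is a
unit of `O_F`), `π` a uniformizer of `F` and `L = F(ϖ)` with `ϖ^e = π` the corresponding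
cyclic totally ramified Kummer extension of degree `e`, with `Gal(L/F)` generated by
`σ₀ : ϖ ↦ ζ_e ϖ`.  With `v` the normalized valuation of `L` (so `v ϖ = -1` additively, and
`v(Fˣ) = eℤ`), the square root of the inverse different is `A_{L/F} = ϖ^{(1-e)/2} O_L`, and
the element `α = e⁻¹ Σ_{k=0}^{e-1} ϖ^{k+(1-e)/2}` is a free generator:
`O_F[Gal(L/F)] · α = A_{L/F}`. -/
theorem stmt14 (F L : Type*) [Field F] [Field L] [Algebra F L]
    [FiniteDimensional F L] [IsGalois F L]
    (v : Valuation L (WithZero (Multiplicative ℤ)))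
    (e : ℕ) (he : Odd e) (hpos : 0 < e)
    (hfinrank : Module.finrank F L = e)
    (ϖ : L) (hϖ : v ϖ = (ofAdd (-1 : ℤ) : Multiplicative ℤ))
    (π : F) (hπ : algebraMap F L π = ϖ ^ e)
    (hadj : IntermediateField.adjoin F {ϖ} = ⊤)
    (htotram : ∀ c : F, c ≠ 0 → ∃ k : ℤ,
      v (algebraMap F L c) = ((ofAdd (-(e : ℤ)) : Multiplicative ℤ) : WithZero (Multiplicative ℤ)) ^ k)
    (hetame : v ((e : L)) = 1)
    (ζ : F) (hζ : IsPrimitiveRoot ζ e)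
    (σ₀ : L ≃ₐ[F] L) (hσ₀ : σ₀ ϖ = algebraMap F L ζ * ϖ)
    (hgen : ∀ ρ : L ≃ₐ[F] L, ∃ i : ℕ, ρ = σ₀ ^ i)
    (α : L)
    (hα : α = (e : L)⁻¹ * ∑ k ∈ Finset.range e, ϖ ^ ((k : ℤ) + (1 - (e : ℤ)) / 2)) :
    {x : L | ∃ c : (L ≃ₐ[F] L) → F,
        (∀ ρ : L ≃ₐ[F] L, v (algebraMap F L (c ρ)) ≤ 1) ∧
        x = ∑ ρ : L ≃ₐ[F] L, algebraMap F L (c ρ) * ρ α} =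
      {x : L | v (ϖ ^ (((e : ℤ) - 1) / 2) * x) ≤ 1} :=
  stmt14_general F L v e he hfinrank ϖ hϖ htotram hetame ζ hζ σ₀ hσ₀ α hα
end

section
/- Let p be an odd prime, F/ℚ_p unramified, ζ a primitive p-th root of unity, and L/F a degree-p totally ramified extension with L(ζ) = F(ζ, x^{1/p}) where x ∈ F(ζ) and v_{L(ζ)}(x^{1/p} - 1) = 1. For i ∈ 𝔽_p^× let y_i = ω_i(x^{1/p}) where ω_i ∈ Gal(L(ζ)/L) sends ζ to ζ^{c(i^{-1})} (c(j) the representative of j in [(1-p)/2,(p-1)/2]). Then the element α = (1/p) Σ_{k∈𝔽_p} Π_{i∈𝔽_p^×} y_i^{c(ik)} lies in L and satisfies v_L(α) ≥ 1 - p; hence α ∈ A_{L/F}, the square root of the inverse different of L/F. -/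
open Multiplicative

/-- The symmetric representative `c(j) ∈ [(1-p)/2, (p-1)/2]` of `j ∈ ℤ/pℤ`. -/
def symmRep (p : ℕ) (j : ZMod p) : ℤ :=
  if (j.val : ℤ) ≤ ((p : ℤ) - 1) / 2 then (j.val : ℤ) else (j.val : ℤ) - p

section Helpers

open Polynomial Finset

lemma symmRep_cast (p : ℕ) [NeZero p] (j : ZMod p) : ((symmRep p j : ℤ) : ZMod p) = j := by
  unfold symmRep
  split_ifs <;> simp [ZMod.natCast_val, ZMod.cast_id, ZMod.natCast_self]

lemma symmRep_bounds (p m : ℕ) [NeZero p] (hm : p = 2 * m + 1) (j : ZMod p) :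
    0 ≤ symmRep p j + m ∧ symmRep p j + m ≤ 2 * m := by
  have hval : j.val < p := ZMod.val_lt j
  have hdiv : ((p : ℤ) - 1) / 2 = m := by subst hm; push_cast; omega
  unfold symmRep
  rw [hdiv]
  split_ifs with h <;> omega

lemma sum_eval_zmod (p : ℕ) [Fact p.Prime] (P : Polynomial (ZMod p))
    (hP : P.natDegree < p - 1) : ∑ k : ZMod p, P.eval k = 0 := by
  have hq : Fintype.card (ZMod p) = p := ZMod.card p
  calc ∑ k : ZMod p, P.eval k
      = ∑ k : ZMod p, ∑ e ∈ range (P.natDegree + 1), P.coeff e * k ^ e := by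
        simp [Polynomial.eval_eq_sum_range]
    _ = ∑ e ∈ range (P.natDegree + 1), P.coeff e * ∑ k : ZMod p, k ^ e := by
        rw [Finset.sum_comm]; simp [Finset.mul_sum]
    _ = 0 := by
        apply Finset.sum_eq_zero
        intro e he
        rw [FiniteField.sum_pow_lt_card_sub_one (K := ZMod p) e
          (by rw [hq]; simp at he; omega), mul_zero]

lemma N_cast (p m : ℕ) [NeZero p] (hm : p = 2 * m + 1) (j : ZMod p) :
    (((symmRep p j + m).toNat : ZMod p)) = j + m := by
  have h0 := (symmRep_bounds p m hm j).1
  have : (((symmRep p j + m).toNat : ℤ) : ZMod p) = j + m := by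
    rw [Int.toNat_of_nonneg h0]
    push_cast [symmRep_cast]
    ring
  exact_mod_cast this

lemma key_dvd (p m : ℕ) [Fact p.Prime] (hm : p = 2 * m + 1) (g : (ZMod p)ˣ → ℕ)
    (hd : ∑ i, g i < p - 1) :
    p ∣ ∑ k : ZMod p, ∏ i : (ZMod p)ˣ, ((symmRep p ((i : ZMod p) * k) + m).toNat).choose (g i) := by
  have hp : p.Prime := Fact.out
  rw [← ZMod.natCast_eq_zero_iff]
  push_cast
  have hgle : ∀ i : (ZMod p)ˣ, g i < p := fun i =>
    lt_of_le_of_lt (Finset.single_le_sum (fun _ _ => Nat.zero_le _) (Finset.mem_univ i))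
      (by omega)
  have hU : (∏ i : (ZMod p)ˣ, ((g i).factorial : ZMod p)) ≠ 0 := by
    rw [Ne, Finset.prod_eq_zero_iff]
    rintro ⟨i, -, hi⟩
    rw [ZMod.natCast_eq_zero_iff] at hi
    exact absurd (hp.dvd_factorial.mp hi) (by have := hgle i; omega)
  set Q : Polynomial (ZMod p) :=
    ∏ i : (ZMod p)ˣ, (descPochhammer (ZMod p) (g i)).comp (C ((i : ZMod p)) * X + C (m : ZMod p))
    with hQ
  suffices hS : (∏ i : (ZMod p)ˣ, ((g i).factorial : ZMod p)) *
      (∑ k : ZMod p, ∏ i : (ZMod p)ˣ,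
        ((((symmRep p ((i : ZMod p) * k) + m).toNat).choose (g i) : ℕ) : ZMod p)) = 0 by
    rcases mul_eq_zero.mp hS with h | h
    · exact absurd h hU
    · exact h
  have key : ∀ k : ZMod p, (∏ i : (ZMod p)ˣ, ((g i).factorial : ZMod p)) *
      ∏ i : (ZMod p)ˣ, ((((symmRep p ((i : ZMod p) * k) + m).toNat).choose (g i) : ℕ) : ZMod p)
      = Q.eval k := by
    intro k
    rw [← Finset.prod_mul_distrib, hQ, Polynomial.eval_prod]
    apply Finset.prod_congr rfl
    intro i _
    rw [eval_comp, eval_add, eval_mul, eval_C, eval_X, eval_C,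
      ← N_cast p m hm ((i : ZMod p) * k), descPochhammer_eval_eq_descFactorial,
      Nat.descFactorial_eq_factorial_mul_choose]
    push_cast
    ring
  rw [Finset.mul_sum]
  simp only [key]
  apply sum_eval_zmod
  calc Q.natDegree ≤ ∑ i : (ZMod p)ˣ,
        ((descPochhammer (ZMod p) (g i)).comp (C ((i : ZMod p)) * X + C (m : ZMod p))).natDegree :=
        Polynomial.natDegree_prod_le _ _
    _ ≤ ∑ i : (ZMod p)ˣ, g i := by
        apply Finset.sum_le_sum
        intro i _
        refine le_trans (Polynomial.natDegree_comp_le) ?_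
        calc (descPochhammer (ZMod p) (g i)).natDegree *
              (C ((i : ZMod p)) * X + C (m : ZMod p)).natDegree
            ≤ g i * 1 := Nat.mul_le_mul
              (le_of_eq (descPochhammer_natDegree (R := ZMod p) (g i)))
              Polynomial.natDegree_linear_le
          _ = g i := mul_one _
    _ < p - 1 := hd

end Helpers

/-- Let `p` be an odd prime, `F/ℚ_p` unramified, `ζ` a primitive `p`-th
root of unity, and `L/F` a degree-`p` totally ramified extension (inside `M = L(ζ)`) with
`M = L(ζ) = F(ζ, y)` where `y^p = x ∈ F(ζ)` and `y - 1` is a uniformizer of `M`.  For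
`i ∈ 𝔽_pˣ` let `y_i = ω_i(y)` where `ω_i ∈ Gal(M/L)` sends `ζ ↦ ζ^{c(i⁻¹)}`.  Then
`α = p⁻¹ Σ_{k ∈ 𝔽_p} Π_{i ∈ 𝔽_pˣ} y_i^{c(ik)}` lies in `L` and satisfies
`v_L(α) ≥ 1 - p` (i.e. `v_M(α) ≥ -(p-1)²`), hence `α ∈ A_{L/F}`. -/
theorem stmt16 (p : ℕ) [Fact p.Prime] (hodd : Odd p)
    (F M : Type*) [Field F] [Field M] [Algebra F M] [FiniteDimensional F M]
    (L : IntermediateField F M) [IsGalois F M] [IsGalois (↥L) M]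
    (hL : Module.finrank F (↥L) = p)
    (v : Valuation M (WithZero (Multiplicative ℤ)))
    (hvGal : ∀ (ρ : M ≃ₐ[↥L] M) (z : M), v (ρ z) = v z)
    (hvp : v ((p : M)) = (ofAdd (-((p : ℤ) * ((p : ℤ) - 1))) : Multiplicative ℤ))
    (ζ : M) (hζ : IsPrimitiveRoot ζ p)
    (x y : M) (hx : x ∈ IntermediateField.adjoin F {ζ}) (hyx : y ^ p = x)
    (hyunif : v (y - 1) = (ofAdd (-1 : ℤ) : Multiplicative ℤ))
    (htop : IntermediateField.adjoin F {ζ, y} = ⊤)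
    (hLζ : L ⊔ IntermediateField.adjoin F {ζ} = ⊤)
    (ω : (ZMod p)ˣ → (M ≃ₐ[↥L] M))
    (hω : ∀ i : (ZMod p)ˣ, ω i ζ = ζ ^ (symmRep p ((i⁻¹ : (ZMod p)ˣ) : ZMod p)))
    (hωsurj : Function.Surjective ω)
    (α : M)
    (hα : α = (p : M)⁻¹ *
      ∑ k : ZMod p, ∏ i : (ZMod p)ˣ, (ω i y) ^ (symmRep p (((i : ZMod p)) * k))) :
    α ∈ L ∧ v α ≤ ((ofAdd (((p : ℤ) - 1) ^ 2) : Multiplicative ℤ) : WithZero (Multiplicative ℤ)) := by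
  classical
  have hp : p.Prime := Fact.out
  haveI : NeZero p := ⟨hp.ne_zero⟩
  obtain ⟨m, hm0⟩ := hodd
  have hm' : p = 2 * m + 1 := by omega
  have hζ0 : ζ ≠ 0 := hζ.ne_zero hp.ne_zero
  -- two automorphisms agreeing on ζ agree everywhere
  have hext : ∀ σ τ : M ≃ₐ[↥L] M, σ ζ = τ ζ → ∀ z : M, σ z = τ z := by
    intro σ τ hστ
    let E : Subfield M :=
      { carrier := {z : M | σ z = τ z}
        mul_mem' := fun ha hb => by simp only [Set.mem_setOf_eq, map_mul] at *; rw [ha, hb]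
        one_mem' := by simp [Set.mem_setOf_eq]
        add_mem' := fun ha hb => by simp only [Set.mem_setOf_eq, map_add] at *; rw [ha, hb]
        zero_mem' := by simp [Set.mem_setOf_eq]
        neg_mem' := fun ha => by simp only [Set.mem_setOf_eq, map_neg] at *; rw [ha]
        inv_mem' := fun a ha => by simp only [Set.mem_setOf_eq, map_inv₀] at *; rw [ha] }
    have hLE : ∀ z ∈ L, z ∈ E := by
      intro z hz
      show σ z = τ z
      have h1 := σ.commutes (⟨z, hz⟩ : L)
      have h2 := τ.commutes (⟨z, hz⟩ : L)
      rw [IntermediateField.algebraMap_apply] at h1 h2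
      exact h1.trans h2.symm
    have hFE : ∀ w : F, algebraMap F M w ∈ E := by
      intro w
      rw [IsScalarTower.algebraMap_apply F (↥L) M]
      exact hLE _ (SetLike.coe_mem _)
    let E' : IntermediateField F M := E.toIntermediateField hFE
    have h1 : L ≤ E' := fun z hz => hLE z hz
    have h2 : IntermediateField.adjoin F {ζ} ≤ E' := by
      rw [IntermediateField.adjoin_le_iff]
      intro w hw
      rw [Set.mem_singleton_iff] at hw
      subst hw
      exact hστ
    have htot : (⊤ : IntermediateField F M) ≤ E' := hLζ ▸ sup_le h1 h2
    intro z
    exact htot (IntermediateField.mem_top (x := z))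
  -- zeta powers depend only on exponent mod p
  have hζeq : ∀ a b : ℤ, ((a : ZMod p) = (b : ZMod p)) → ζ ^ a = ζ ^ b := by
    intro a b hab
    have hdvd : (p : ℤ) ∣ a - b := by
      rwa [← ZMod.intCast_zmod_eq_zero_iff_dvd, Int.cast_sub, sub_eq_zero]
    have h1 : ζ ^ (a - b) = 1 := (hζ.zpow_eq_one_iff_dvd _).mpr hdvd
    calc ζ ^ a = ζ ^ (b + (a - b)) := by ring_nf
      _ = ζ ^ b * ζ ^ (a - b) := zpow_add₀ hζ0 _ _
      _ = ζ ^ b := by rw [h1, mul_one]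
  -- ω is multiplicative
  have hωmul : ∀ j i : (ZMod p)ˣ, (ω j) * (ω i) = ω (j * i) := by
    intro j i
    refine AlgEquiv.ext (hext _ _ ?_)
    rw [AlgEquiv.mul_apply, hω i, map_zpow₀, hω j, ← zpow_mul, hω (j * i)]
    apply hζeq
    push_cast [symmRep_cast]
    rw [mul_inv_rev]
    push_cast
    ring
  set S : M := ∑ k : ZMod p, ∏ i : (ZMod p)ˣ, (ω i y) ^ (symmRep p (((i : ZMod p)) * k))
    with hS
  -- S is Galois-invariant
  have hfix : ∀ σ : M ≃ₐ[↥L] M, σ S = S := by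
    intro σ
    obtain ⟨j, rfl⟩ := hωsurj σ
    set Φ : ZMod p → M := fun k => ∏ i : (ZMod p)ˣ, (ω i y) ^ (symmRep p ((i : ZMod p) * k))
      with hΦ
    have hu : ((j⁻¹ : (ZMod p)ˣ) : ZMod p) ≠ 0 := Units.ne_zero _
    calc ω j S = ∑ k : ZMod p, ∏ i : (ZMod p)ˣ,
          (ω (j * i) y) ^ (symmRep p ((i : ZMod p) * k)) := by
          rw [hS, map_sum]
          refine Finset.sum_congr rfl fun k _ => ?_
          rw [map_prod]
          refine Finset.prod_congr rfl fun i _ => ?_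
          rw [map_zpow₀, ← AlgEquiv.mul_apply, hωmul]
      _ = ∑ k : ZMod p, Φ (((j⁻¹ : (ZMod p)ˣ) : ZMod p) * k) := by
          refine Finset.sum_congr rfl fun k _ => ?_
          rw [hΦ]
          refine Fintype.prod_equiv (Equiv.mulLeft j) _ _ fun i => ?_
          simp only [Equiv.coe_mulLeft]
          congr 2
          rw [← mul_assoc, ← Units.val_mul, mul_comm j i, mul_inv_cancel_right]
      _ = ∑ k : ZMod p, Φ k := by
          exact Fintype.sum_equiv (Equiv.mulLeft₀ _ hu) _ _ fun k => rfl
      _ = S := by rw [hS]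
  -- α is fixed
  have hαfix : ∀ σ : M ≃ₐ[↥L] M, σ α = α := by
    intro σ
    rw [hα, map_mul, map_inv₀, map_natCast, hfix]
  haveI : FiniteDimensional (↥L) M := FiniteDimensional.right F (↥L) M
  have hmem : α ∈ L := by
    have h1 : α ∈ IntermediateField.fixedField (⊤ : Subgroup (M ≃ₐ[↥L] M)) := by
      rintro ⟨σ, -⟩
      exact hαfix σ
    rw [← IntermediateField.fixingSubgroup_bot, IsGalois.fixedField_fixingSubgroup,
      IntermediateField.mem_bot] at h1
    obtain ⟨β, hβ⟩ := h1
    rw [← hβ, IntermediateField.algebraMap_apply]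
    exact β.2
  refine ⟨hmem, ?_⟩
  -- valuation preliminaries
  have hcoe_le : ∀ a b : ℤ, a ≤ b →
      ((ofAdd a : Multiplicative ℤ) : WithZero (Multiplicative ℤ)) ≤
        ((ofAdd b : Multiplicative ℤ) : WithZero (Multiplicative ℤ)) :=
    fun a b h => WithZero.coe_le_coe.mpr (Multiplicative.ofAdd_le.mpr h)
  have hcoe1 : ((ofAdd (0 : ℤ) : Multiplicative ℤ) : WithZero (Multiplicative ℤ)) = 1 := rfl
  have hvnat : ∀ n : ℕ, v (n : M) ≤ 1 := by
    intro n
    induction n with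
    | zero => simp
    | succ n ih =>
      push_cast
      exact le_trans (v.map_add _ _) (max_le ih (le_of_eq v.map_one))
  have hvy : v y = 1 := by
    have hne : v (y - 1) ≠ v 1 := by
      rw [hyunif, v.map_one, ← hcoe1]
      intro h
      have h2 := Multiplicative.ofAdd.injective (WithZero.coe_inj.mp h)
      norm_num at h2
    have hmax := v.map_add_of_distinct_val hne
    have h2 : y - 1 + 1 = y := by ring
    rw [h2, v.map_one, hyunif] at hmax
    rw [hmax, max_eq_right]
    rw [← hcoe1]
    exact hcoe_le _ _ (by norm_num)
  have hvyi : ∀ i : (ZMod p)ˣ, v (ω i y) = 1 := fun i => by rw [hvGal]; exact hvy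
  have hyine : ∀ i : (ZMod p)ˣ, ω i y ≠ 0 := by
    intro i h
    have := hvyi i
    rw [h, v.map_zero] at this
    exact zero_ne_one this
  have hvt : ∀ i : (ZMod p)ˣ, v (ω i y - 1) =
      ((ofAdd (-1 : ℤ) : Multiplicative ℤ) : WithZero (Multiplicative ℤ)) := by
    intro i
    have h1 : ω i y - 1 = ω i (y - 1) := by rw [map_sub, map_one]
    rw [h1, hvGal, hyunif]
  set N : (ZMod p)ˣ → ZMod p → ℕ :=
    fun i k => (symmRep p ((i : ZMod p) * k) + m).toNat with hN
  have hNle : ∀ i k, N i k ≤ 2 * m := by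
    intro i k
    have h2 := (symmRep_bounds p m hm' ((i : ZMod p) * k)).2
    exact Int.toNat_le.mpr (by exact_mod_cast h2)
  have hprodW : ∀ k : ZMod p,
      (∏ i : (ZMod p)ˣ, (ω i y) ^ (symmRep p ((i : ZMod p) * k))) *
        (∏ i : (ZMod p)ˣ, ω i y) ^ m
      = ∏ i : (ZMod p)ˣ, (ω i y) ^ (N i k) := by
    intro k
    rw [← Finset.prod_pow, ← Finset.prod_mul_distrib]
    refine Finset.prod_congr rfl fun i _ => ?_
    rw [← zpow_natCast (ω i y) m, ← zpow_add₀ (hyine i), ← zpow_natCast (ω i y) (N i k)]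
    congr 1
    rw [hN]
    rw [Int.toNat_of_nonneg (symmRep_bounds p m hm' _).1]
  set T : M := (∏ i : (ZMod p)ˣ, ω i y) ^ m with hT
  have hvT1 : v T = 1 := by
    rw [hT, map_pow, map_prod]
    simp [hvyi]
  set S' : M := ∑ k : ZMod p, ∏ i : (ZMod p)ˣ, (ω i y) ^ (N i k) with hS'
  have hSS' : S * T = S' := by
    rw [hS, hS', Finset.sum_mul]
    exact Finset.sum_congr rfl fun k _ => hprodW k
  have hbin : ∀ (i : (ZMod p)ˣ) (k : ZMod p),
      (ω i y) ^ (N i k) = ∑ e ∈ Finset.range p, ((N i k).choose e : M) * (ω i y - 1) ^ e := by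
    intro i k
    have h1 : ω i y = (ω i y - 1) + 1 := by ring
    calc (ω i y) ^ N i k = ∑ e ∈ Finset.range (N i k + 1),
          (ω i y - 1) ^ e * 1 ^ (N i k - e) * ((N i k).choose e : M) := by
          rw [← add_pow, ← h1]
      _ = ∑ e ∈ Finset.range p, (ω i y - 1) ^ e * 1 ^ (N i k - e) * ((N i k).choose e : M) := by
          apply Finset.sum_subset
          · apply Finset.range_subset_range.mpr
            have := hNle i k
            omega
          · intro e _ hne
            rw [Finset.mem_range, not_lt] at hne
            rw [Nat.choose_eq_zero_of_lt (by omega)]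
            simp
      _ = ∑ e ∈ Finset.range p, ((N i k).choose e : M) * (ω i y - 1) ^ e := by
          refine Finset.sum_congr rfl fun e _ => ?_
          rw [one_pow]
          ring
  set G := Fintype.piFinset (fun _ : (ZMod p)ˣ => Finset.range p) with hG
  have hexp : S' = ∑ g ∈ G,
      (((∑ k : ZMod p, ∏ i : (ZMod p)ˣ, (N i k).choose (g i) : ℕ)) : M) *
        ∏ i : (ZMod p)ˣ, (ω i y - 1) ^ (g i) := by
    rw [hS']
    calc ∑ k : ZMod p, ∏ i : (ZMod p)ˣ, (ω i y) ^ (N i k)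
        = ∑ k : ZMod p, ∑ g ∈ G, ∏ i : (ZMod p)ˣ,
            (((N i k).choose (g i) : M) * (ω i y - 1) ^ (g i)) := by
          refine Finset.sum_congr rfl fun k _ => ?_
          simp only [hbin]
          rw [hG, Finset.prod_univ_sum]
      _ = ∑ g ∈ G, ∑ k : ZMod p, ∏ i : (ZMod p)ˣ,
            (((N i k).choose (g i) : M) * (ω i y - 1) ^ (g i)) := Finset.sum_comm
      _ = _ := by
          refine Finset.sum_congr rfl fun g _ => ?_
          rw [Nat.cast_sum, Finset.sum_mul]
          refine Finset.sum_congr rfl fun k _ => ?_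
          rw [Nat.cast_prod, ← Finset.prod_mul_distrib]
  have hγ : ∀ g ∈ G,
      v ((((∑ k : ZMod p, ∏ i : (ZMod p)ˣ, (N i k).choose (g i) : ℕ)) : M) *
        ∏ i : (ZMod p)ˣ, (ω i y - 1) ^ (g i)) ≤
      ((ofAdd (-((p : ℤ) - 1)) : Multiplicative ℤ) : WithZero (Multiplicative ℤ)) := by
    intro g _
    rw [v.map_mul]
    have hvTg : v (∏ i : (ZMod p)ˣ, (ω i y - 1) ^ (g i)) =
        ((ofAdd (-(∑ i : (ZMod p)ˣ, g i : ℤ)) : Multiplicative ℤ) :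
          WithZero (Multiplicative ℤ)) := by
      rw [map_prod]
      simp only [map_pow, hvt]
      rw [Finset.prod_pow_eq_pow_sum, ← WithZero.coe_pow, ← ofAdd_nsmul]
      congr 2
      push_cast [nsmul_eq_mul]
      ring
    by_cases hd : ∑ i : (ZMod p)ˣ, g i < p - 1
    · obtain ⟨B, hB⟩ := key_dvd p m hm' g hd
      have hB' : ((∑ k : ZMod p, ∏ i : (ZMod p)ˣ, (N i k).choose (g i) : ℕ) : M)
          = (p : M) * (B : M) := by
        rw [hN]
        rw_mod_cast [hB]
      have h1 : v (((∑ k : ZMod p, ∏ i : (ZMod p)ˣ, (N i k).choose (g i) : ℕ)) : M) ≤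
          ((ofAdd (-((p : ℤ) * ((p : ℤ) - 1))) : Multiplicative ℤ) :
            WithZero (Multiplicative ℤ)) := by
        rw [hB', v.map_mul, hvp]
        calc (((ofAdd (-((p : ℤ) * ((p : ℤ) - 1))) : Multiplicative ℤ)) :
              WithZero (Multiplicative ℤ)) * v ((B : M))
            ≤ _ * 1 := mul_le_mul_right (hvnat B) _
          _ = _ := mul_one _
      have h2 : v (∏ i : (ZMod p)ˣ, (ω i y - 1) ^ (g i)) ≤ 1 := by
        rw [hvTg, ← hcoe1]
        apply hcoe_le
        simp only [neg_nonpos]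
        exact Finset.sum_nonneg fun _ _ => Int.natCast_nonneg _
      calc v (((∑ k : ZMod p, ∏ i : (ZMod p)ˣ, (N i k).choose (g i) : ℕ)) : M) *
            v (∏ i : (ZMod p)ˣ, (ω i y - 1) ^ (g i))
          ≤ ((ofAdd (-((p : ℤ) * ((p : ℤ) - 1))) : Multiplicative ℤ) :
              WithZero (Multiplicative ℤ)) * 1 := mul_le_mul' h1 h2
        _ = _ := mul_one _
        _ ≤ ((ofAdd (-((p : ℤ) - 1)) : Multiplicative ℤ) : WithZero (Multiplicative ℤ)) := by
            apply hcoe_le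
            have hp2 : (2 : ℤ) ≤ (p : ℤ) := by exact_mod_cast hp.two_le
            nlinarith
    · have h1 : v (((∑ k : ZMod p, ∏ i : (ZMod p)ˣ, (N i k).choose (g i) : ℕ)) : M) ≤ 1 :=
        hvnat _
      have h2 : v (∏ i : (ZMod p)ˣ, (ω i y - 1) ^ (g i)) ≤
          ((ofAdd (-((p : ℤ) - 1)) : Multiplicative ℤ) : WithZero (Multiplicative ℤ)) := by
        rw [hvTg]
        apply hcoe_le
        have hle : p - 1 ≤ ∑ i : (ZMod p)ˣ, g i := le_of_not_gt hd
        rw [← Nat.cast_sum]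
        omega
      calc v (((∑ k : ZMod p, ∏ i : (ZMod p)ˣ, (N i k).choose (g i) : ℕ)) : M) *
            v (∏ i : (ZMod p)ˣ, (ω i y - 1) ^ (g i))
          ≤ 1 * ((ofAdd (-((p : ℤ) - 1)) : Multiplicative ℤ) :
              WithZero (Multiplicative ℤ)) := mul_le_mul' h1 h2
        _ = _ := one_mul _
  have hvS' : v S' ≤ ((ofAdd (-((p : ℤ) - 1)) : Multiplicative ℤ) :
      WithZero (Multiplicative ℤ)) := by
    rw [hexp]
    exact v.map_sum_le hγ
  have hvS : v S ≤ ((ofAdd (-((p : ℤ) - 1)) : Multiplicative ℤ) :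
      WithZero (Multiplicative ℤ)) := by
    have hvv : v S = v S' := by rw [← hSS', v.map_mul, hvT1, mul_one]
    rw [hvv]
    exact hvS'
  rw [hα, v.map_mul, v.map_inv, hvp]
  calc ((((ofAdd (-((p : ℤ) * ((p : ℤ) - 1))) : Multiplicative ℤ)) :
        WithZero (Multiplicative ℤ)))⁻¹ * v S
      ≤ (((ofAdd (-((p : ℤ) * ((p : ℤ) - 1))) : Multiplicative ℤ) :
          WithZero (Multiplicative ℤ)))⁻¹ *
        ((ofAdd (-((p : ℤ) - 1)) : Multiplicative ℤ) : WithZero (Multiplicative ℤ)) :=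
        mul_le_mul_right hvS _
    _ = ((ofAdd (((p : ℤ) - 1) ^ 2) : Multiplicative ℤ) : WithZero (Multiplicative ℤ)) := by
        rw [← WithZero.coe_inv, ← WithZero.coe_mul]
        congr 1
        rw [← ofAdd_neg, ← ofAdd_add]
        congr 1
        ring
end
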